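/- For a one-dimensional query S with sensitivity Δ, the Gaussian mechanism with standard deviation σ ≥ √(2 ln(1.25/δ)) · Δ / ε is (ε, δ)-differentially private, for any ε ∈ (0, 1) and δ ∈ (0, 1). -/

import Mathlib

/-!
Write an output as `a + z` and put `c = a - b`. The privacy loss `log (p_a / p_b)` of the two
Gaussian densities at `a + z` is `(2 c z + c²) / (2σ²)`, which exceeds `ε` only when `z` (or `-z`,
according to the sign of `c`) exceeds `εσ²/|c| - |c|/2 ≥ q := εσ²/Δ - Δ/2`. Hence
`Pr[M(D) ∈ T] ≤ e^ε Pr[M(D') ∈ T] + Pr[Z > q]`. For `q ≥ 0` the tail is at most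
`½ exp (-q²/(2σ²))`, and the calibration of `σ` gives `q² ≥ (2 ln (1.25/δ) - 1) σ²`, so the tail is
at most `½ e^{1/2} δ / 1.25 ≤ δ`. For `q < 0` the calibration forces `ln (1.25/δ) < 1/4`, i.e.
`δ ≥ 15/16`, and the crude bound `½ + |q| / √(2πσ²) ≤ 5/6` suffices.
-/

open MeasureTheory ProbabilityTheory Set Real
open scoped NNReal ENNReal

lemma withDensity_apply_le_mul_add_compl {α : Type*} [MeasurableSpace α] {ρ : Measure α}
    {f g : α → ℝ≥0∞} {C : ℝ≥0∞} {G T : Set α} (hg : Measurable g) (hT : MeasurableSet T)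
    (hG : MeasurableSet G) (hfg : ∀ x ∈ G, f x ≤ C * g x) :
    ρ.withDensity f T ≤ C * ρ.withDensity g T + ρ.withDensity f Gᶜ := by
  have hgood : ρ.withDensity f (T ∩ G) ≤ C * ρ.withDensity g T := by
    rw [withDensity_apply _ (hT.inter hG), withDensity_apply _ hT, ← lintegral_const_mul _ hg]
    calc ∫⁻ x in T ∩ G, f x ∂ρ ≤ ∫⁻ x in T ∩ G, C * g x ∂ρ :=
          setLIntegral_mono (hg.const_mul C) fun x hx => hfg x hx.2
      _ ≤ ∫⁻ x in T, C * g x ∂ρ := lintegral_mono_set inter_subset_left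
  calc ρ.withDensity f T ≤ ρ.withDensity f (T ∩ G) + ρ.withDensity f (T \ G) :=
        measure_le_inter_add_sdiff _ _ _
    _ ≤ C * ρ.withDensity g T + ρ.withDensity f Gᶜ :=
        add_le_add hgood (measure_mono (sdiff_subset_compl T G))

-- `2 c z + c² - 2 K` is convex in `c` and negative at `c = 0`, so once positive it stays positive.
lemma setOf_lt_add_sq_sub_sq_subset_Ioi {K c Δ : ℝ} (hK : 0 ≤ K) (hc : 0 ≤ c) (hcΔ : c ≤ Δ) :
    {z : ℝ | 2 * K < (z + c) ^ 2 - z ^ 2} ⊆ Ioi (K / Δ - Δ / 2) := by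
  intro z hz
  have hz : 2 * K < 2 * c * z + c ^ 2 := by simp only [mem_ofPred_eq] at hz; linarith
  have hc0 : 0 < c := hc.lt_of_ne (by rintro rfl; linarith)
  have hΔ : 0 < Δ := hc0.trans_le hcΔ
  have : 2 * K < 2 * Δ * z + Δ ^ 2 := by nlinarith [mul_nonneg hc (sub_nonneg.2 hcΔ)]
  rw [mem_Ioi, sub_lt_iff_lt_add, div_lt_iff₀ hΔ]
  nlinarith

namespace ProbabilityTheory

variable {v : ℝ≥0}

lemma gaussianPDFReal_le_exp_mul {μ μ' K x : ℝ} (h : (x - μ') ^ 2 - (x - μ) ^ 2 ≤ 2 * v * K) :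
    gaussianPDFReal μ v x ≤ exp K * gaussianPDFReal μ' v x := by
  rcases eq_or_ne v 0 with rfl | hv
  · simp [gaussianPDFReal_zero_var]
  have hv : (0 : ℝ) < 2 * v := by positivity
  rw [gaussianPDFReal_def, gaussianPDFReal_def, mul_left_comm, ← exp_add]
  refine mul_le_mul_of_nonneg_left (exp_le_exp.2 ?_) (by positivity)
  rw [show K + -(x - μ') ^ 2 / (2 * v) = (2 * v * K - (x - μ') ^ 2) / (2 * v) by field_simp; ring]
  exact div_le_div_of_nonneg_right (by linarith) hv.le

lemma gaussianPDF_le_exp_mul {μ μ' K x : ℝ} (h : (x - μ') ^ 2 - (x - μ) ^ 2 ≤ 2 * v * K) :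
    gaussianPDF μ v x ≤ ENNReal.ofReal (exp K) * gaussianPDF μ' v x := by
  rw [gaussianPDF, gaussianPDF, ← ENNReal.ofReal_mul (exp_nonneg K)]
  exact ENNReal.ofReal_le_ofReal (gaussianPDFReal_le_exp_mul h)

lemma gaussianPDFReal_le_inv_sqrt (μ : ℝ) (v : ℝ≥0) (x : ℝ) :
    gaussianPDFReal μ v x ≤ (√(2 * π * v))⁻¹ := by
  rw [gaussianPDFReal_def]
  refine mul_le_of_le_one_right (by positivity) (exp_le_one_iff.2 ?_)
  exact div_nonpos_of_nonpos_of_nonneg (neg_nonpos.2 (sq_nonneg _)) (by positivity)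

lemma gaussianReal_apply_eq_preimage_add (μ : ℝ) {s : Set ℝ} (hs : MeasurableSet s) :
    gaussianReal μ v s = gaussianReal 0 v ((μ + ·) ⁻¹' s) := by
  rw [← Measure.map_apply (by fun_prop) hs, gaussianReal_map_const_add, zero_add]

lemma gaussianReal_zero_preimage_neg {s : Set ℝ} (hs : MeasurableSet s) :
    gaussianReal 0 v (Neg.neg ⁻¹' s) = gaussianReal 0 v s := by
  conv_rhs => rw [← neg_zero, ← gaussianReal_map_neg, Measure.map_apply measurable_neg hs]

lemma gaussianReal_zero_Ioi_zero_le : gaussianReal 0 v (Ioi 0) ≤ 2⁻¹ := by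
  have hsymm : gaussianReal 0 v (Iio 0) = gaussianReal 0 v (Ioi 0) := by
    rw [← gaussianReal_zero_preimage_neg measurableSet_Ioi]
    congr 1
    ext x
    simp
  have hsum : gaussianReal 0 v (Iio 0) + gaussianReal 0 v (Ioi 0) ≤ 1 := by
    rw [← measure_union Ioi_disjoint_Iio_same.symm measurableSet_Ioi]
    exact prob_le_one
  rw [hsymm, ← two_mul] at hsum
  rwa [ENNReal.le_inv_iff_mul_le, mul_comm]

lemma gaussianReal_Ioc_le (hv : v ≠ 0) (μ a b : ℝ) :
    gaussianReal μ v (Ioc a b) ≤ ENNReal.ofReal ((b - a) / √(2 * π * v)) := by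
  rw [gaussianReal_apply μ hv]
  calc ∫⁻ x in Ioc a b, gaussianPDF μ v x ≤ ∫⁻ _ in Ioc a b, ENNReal.ofReal (√(2 * π * v))⁻¹ :=
        setLIntegral_mono measurable_const fun x _ =>
          ENNReal.ofReal_le_ofReal (gaussianPDFReal_le_inv_sqrt μ v x)
    _ = ENNReal.ofReal ((b - a) / √(2 * π * v)) := by
        rw [setLIntegral_const, Real.volume_Ioc, ← ENNReal.ofReal_mul (by positivity),
          div_eq_mul_inv, mul_comm]

lemma gaussianReal_zero_Ioi_le_of_nonpos (hv : v ≠ 0) {q : ℝ} (hq : q ≤ 0) :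
    gaussianReal 0 v (Ioi q) ≤ ENNReal.ofReal (-q / √(2 * π * v) + 2⁻¹) := by
  rw [← Ioc_union_Ioi_eq_Ioi hq, ENNReal.ofReal_add (by have := neg_nonneg.2 hq; positivity)
    (by positivity), ENNReal.ofReal_inv_of_pos two_pos, ENNReal.ofReal_ofNat, ← zero_sub]
  exact (measure_union_le _ _).trans
    (add_le_add (gaussianReal_Ioc_le hv 0 q 0) gaussianReal_zero_Ioi_zero_le)

-- For `x > q ≥ 0`, `x² ≥ q² + (x - q)²`: the density at `x` is at most `exp (-q²/(2v))` times
-- the density centred at `q`, whose mass on `Ioi q` is at most `1/2`.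
lemma gaussianReal_zero_Ioi_le_of_nonneg (hv : v ≠ 0) {q : ℝ} (hq : 0 ≤ q) :
    gaussianReal 0 v (Ioi q) ≤ ENNReal.ofReal (exp (-q ^ 2 / (2 * v)) / 2) := by
  have hdens : ∀ x ∈ Ioi q, (x - q) ^ 2 - (x - 0) ^ 2 ≤ 2 * v * (-q ^ 2 / (2 * v)) := by
    intro x hx
    rw [mul_div_cancel₀ _ (by positivity)]
    nlinarith [mul_nonneg hq (sub_nonneg.2 (le_of_lt (mem_Ioi.1 hx)))]
  calc gaussianReal 0 v (Ioi q) = ∫⁻ x in Ioi q, gaussianPDF 0 v x := gaussianReal_apply 0 hv _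
    _ ≤ ∫⁻ x in Ioi q, ENNReal.ofReal (exp (-q ^ 2 / (2 * v))) * gaussianPDF q v x :=
        setLIntegral_mono ((measurable_gaussianPDF q v).const_mul _) fun x hx =>
          gaussianPDF_le_exp_mul (hdens x hx)
    _ = ENNReal.ofReal (exp (-q ^ 2 / (2 * v))) * gaussianReal q v (Ioi q) := by
        rw [lintegral_const_mul _ (measurable_gaussianPDF q v), gaussianReal_apply q hv]
    _ ≤ ENNReal.ofReal (exp (-q ^ 2 / (2 * v))) * 2⁻¹ := by
        gcongr
        rw [gaussianReal_apply_eq_preimage_add q measurableSet_Ioi]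
        simpa using gaussianReal_zero_Ioi_zero_le
    _ = ENNReal.ofReal (exp (-q ^ 2 / (2 * v)) / 2) := by
        rw [ENNReal.ofReal_div_of_pos two_pos, ENNReal.ofReal_ofNat]
        rfl

-- The exceptional set is where the privacy loss `((t - b)² - (t - a)²) / (2v)` exceeds `ε`.
lemma gaussianReal_le_exp_mul_add (hv : v ≠ 0) (a b ε : ℝ) {T : Set ℝ} (hT : MeasurableSet T) :
    gaussianReal a v T ≤ ENNReal.ofReal (exp ε) * gaussianReal b v T
      + gaussianReal a v {t | 2 * v * ε < (t - b) ^ 2 - (t - a) ^ 2} := by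
  have hG : MeasurableSet {t : ℝ | (t - b) ^ 2 - (t - a) ^ 2 ≤ 2 * v * ε} :=
    measurableSet_le (by fun_prop) measurable_const
  rw [gaussianReal_of_var_ne_zero a hv, gaussianReal_of_var_ne_zero b hv]
  simpa only [compl_ofPred, not_le] using withDensity_apply_le_mul_add_compl
    (measurable_gaussianPDF b v) hT hG fun t ht => gaussianPDF_le_exp_mul ht

lemma gaussianReal_privacyLoss_gt_le {a b ε Δ : ℝ} (hε : 0 ≤ ε) (hab : |a - b| ≤ Δ) :
    gaussianReal a v {t | 2 * v * ε < (t - b) ^ 2 - (t - a) ^ 2}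
      ≤ gaussianReal 0 v (Ioi (v * ε / Δ - Δ / 2)) := by
  have hK : 0 ≤ (v : ℝ) * ε := by positivity
  have hpre : (a + ·) ⁻¹' {t | 2 * v * ε < (t - b) ^ 2 - (t - a) ^ 2}
      = {z : ℝ | 2 * (v * ε) < (z + (a - b)) ^ 2 - z ^ 2} := by
    ext z
    simp only [mem_preimage, mem_ofPred_eq]
    ring_nf
  rw [gaussianReal_apply_eq_preimage_add a (measurableSet_lt measurable_const (by fun_prop)), hpre]
  rcases le_total 0 (a - b) with hc | hc
  · exact measure_mono
      (setOf_lt_add_sq_sub_sq_subset_Ioi hK hc ((le_abs_self _).trans hab))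
  · rw [← gaussianReal_zero_preimage_neg
      (measurableSet_lt measurable_const (by fun_prop))]
    refine measure_mono (subset_trans (fun z hz => ?_)
      (setOf_lt_add_sq_sub_sq_subset_Ioi hK (neg_nonneg.2 hc) ((neg_le_abs _).trans hab)))
    simp only [mem_preimage, mem_ofPred_eq] at hz ⊢
    linarith

end ProbabilityTheory

lemma exp_neg_log_div {c δ : ℝ} (hc : 0 < c) (hδ : 0 < δ) :
    exp (-Real.log (c / δ)) = δ / c := by
  rw [exp_neg, exp_log (div_pos hc hδ), inv_div]

lemma one_fifth_le_log_div {δ : ℝ} (hδ0 : 0 < δ) (hδ1 : δ < 1) : 1 / 5 ≤ Real.log (1.25 / δ) := by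
  have hlog : 1 - δ / 1.25 ≤ Real.log (1.25 / δ) := by
    rw [← inv_div]
    exact one_sub_inv_le_log_of_pos (by positivity)
  have hδ : δ / 1.25 ≤ 4 / 5 := by
    rw [div_le_iff₀ (by norm_num)]
    linarith
  linarith

lemma fifteen_sixteenths_le_of_log_div_lt {δ : ℝ} (hδ : 0 < δ) (hL : Real.log (1.25 / δ) < 1 / 4) :
    15 / 16 ≤ δ := by
  have h1 : 3 / 4 ≤ exp (-(1 / 4)) := by linarith [add_one_le_exp (-(1 / 4) : ℝ)]
  have h2 : exp (-(1 / 4)) ≤ exp (-Real.log (1.25 / δ)) := exp_le_exp.2 (by linarith)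
  rw [exp_neg_log_div (by norm_num) hδ] at h2
  norm_num at h2
  linarith

lemma half_exp_neg_sq_div_le {Δ ε δ σ : ℝ} (hΔ : 0 < Δ) (hε : ε ≤ 1) (hδ : 0 < δ)
    (hσ : 2 * Real.log (1.25 / δ) * Δ ^ 2 ≤ (ε * σ) ^ 2) :
    exp (-(σ ^ 2 * ε / Δ - Δ / 2) ^ 2 / (2 * σ ^ 2)) / 2 ≤ δ := by
  set L := Real.log (1.25 / δ)
  set u := σ ^ 2 * ε / Δ
  have huΔ : u * Δ = σ ^ 2 * ε := div_mul_cancel₀ _ hΔ.ne'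
  have hu : 2 * L * σ ^ 2 ≤ u ^ 2 := by
    refine le_of_mul_le_mul_right ?_ (pow_pos hΔ 2)
    calc 2 * L * σ ^ 2 * Δ ^ 2 = σ ^ 2 * (2 * L * Δ ^ 2) := by ring
      _ ≤ σ ^ 2 * (ε * σ) ^ 2 := by gcongr
      _ = (u * Δ) ^ 2 := by rw [huΔ]; ring
      _ = u ^ 2 * Δ ^ 2 := by ring
  have hq : (2 * L - 1) * σ ^ 2 ≤ (u - Δ / 2) ^ 2 := by
    nlinarith [mul_le_of_le_one_right (sq_nonneg σ) hε]
  have hexp : -(u - Δ / 2) ^ 2 / (2 * σ ^ 2) ≤ 1 / 2 + -L := by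
    rcases eq_or_ne σ 0 with rfl | hσ0
    · have : L ≤ 0 := by
        rw [mul_zero, zero_pow two_ne_zero] at hσ
        nlinarith [pow_pos hΔ 2]
      rw [zero_pow two_ne_zero, mul_zero, div_zero]
      linarith
    rw [div_le_iff₀ (by positivity)]
    linarith
  have hexp_half : exp (1 / 2) ≤ 2 := by
    have := exp_bound_div_one_sub_of_interval (x := 1 / 2) (by norm_num) (by norm_num)
    norm_num at this ⊢
    linarith
  calc exp (-(u - Δ / 2) ^ 2 / (2 * σ ^ 2)) / 2 ≤ exp (1 / 2 + -L) / 2 := by gcongr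
    _ = exp (1 / 2) * (δ / 1.25) / 2 := by rw [exp_add, exp_neg_log_div (by norm_num) hδ]
    _ ≤ 2 * (δ / 1.25) / 2 := by gcongr
    _ ≤ δ := by norm_num; linarith

lemma neg_div_sqrt_add_half_le {Δ ε δ σ : ℝ} (hΔ : 0 < Δ) (hε : ε ∈ Ioo 0 1) (hδ : δ ∈ Ioo 0 1)
    (hσ : 2 * Real.log (1.25 / δ) * Δ ^ 2 ≤ (ε * σ) ^ 2) (hq : σ ^ 2 * ε / Δ - Δ / 2 ≤ 0) :
    -(σ ^ 2 * ε / Δ - Δ / 2) / √(2 * π * σ ^ 2) + 2⁻¹ ≤ δ := by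
  obtain ⟨hε0, hε1⟩ := hε
  obtain ⟨hδ0, hδ1⟩ := hδ
  set L := Real.log (1.25 / δ)
  have hL : 1 / 5 ≤ L := one_fifth_le_log_div hδ0 hδ1
  have hεσ : σ ^ 2 * ε ≤ Δ ^ 2 / 2 := by
    rw [sub_nonpos, div_le_iff₀ hΔ] at hq
    linarith
  have hεσ' : (ε * σ) ^ 2 < Δ ^ 2 / 2 := by
    calc (ε * σ) ^ 2 = ε * (σ ^ 2 * ε) := by ring
      _ ≤ ε * (Δ ^ 2 / 2) := by gcongr
      _ < Δ ^ 2 / 2 := mul_lt_of_lt_one_left (by positivity) hε1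
  have hL' : L < 1 / 4 := by
    have : 2 * L * Δ ^ 2 < 2 * (1 / 4) * Δ ^ 2 := by linarith
    exact lt_of_mul_lt_mul_left (lt_of_mul_lt_mul_right this (by positivity)) zero_le_two
  have hδ' : 15 / 16 ≤ δ := fifteen_sixteenths_le_of_log_div_lt hδ0 hL'
  have hΔσ : Δ ^ 2 ≤ 5 / 2 * σ ^ 2 := by
    have : (ε * σ) ^ 2 ≤ σ ^ 2 := by
      rw [mul_pow]
      exact mul_le_of_le_one_left (sq_nonneg σ) (pow_le_one₀ hε0.le hε1.le)
    nlinarith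
  have hdiv : -(σ ^ 2 * ε / Δ - Δ / 2) / √(2 * π * σ ^ 2) ≤ 1 / 3 := by
    have hσ0 : 0 < σ ^ 2 := by nlinarith
    rw [div_le_iff₀ (by positivity), one_div_mul_eq_div, le_div_iff₀ three_pos, mul_comm]
    refine le_sqrt_of_sq_le ?_
    have : 0 ≤ σ ^ 2 * ε / Δ := by positivity
    nlinarith [pi_gt_three]
  linarith

lemma gaussianReal_zero_Ioi_le_of_sq_log_le {Δ ε δ σ : ℝ} (hΔ : 0 < Δ) (hε : ε ∈ Ioo 0 1)
    (hδ : δ ∈ Ioo 0 1) (hσ0 : σ ≠ 0) (hσ : 2 * Real.log (1.25 / δ) * Δ ^ 2 ≤ (ε * σ) ^ 2) :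
    gaussianReal 0 (σ ^ 2).toNNReal (Ioi ((σ ^ 2).toNNReal * ε / Δ - Δ / 2))
      ≤ ENNReal.ofReal δ := by
  have hv0 : (σ ^ 2).toNNReal ≠ 0 := by simpa using hσ0
  have hv : ((σ ^ 2).toNNReal : ℝ) = σ ^ 2 := Real.coe_toNNReal _ (sq_nonneg σ)
  rcases le_total 0 ((σ ^ 2).toNNReal * ε / Δ - Δ / 2) with hq | hq
  · refine (gaussianReal_zero_Ioi_le_of_nonneg hv0 hq).trans (ENNReal.ofReal_le_ofReal ?_)
    rw [hv]
    exact half_exp_neg_sq_div_le hΔ hε.2.le hδ.1 hσ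
  · refine (gaussianReal_zero_Ioi_le_of_nonpos hv0 hq).trans (ENNReal.ofReal_le_ofReal ?_)
    rw [hv] at hq ⊢
    exact neg_div_sqrt_add_half_le hΔ hε hδ hσ hq

theorem gaussian_mechanism_DP_general {D : Type*} (neighbor : D → D → Prop) (S : D → ℝ)
    (Δ ε δ σ : ℝ)
    (hsens : ∀ x y, neighbor x y → |S x - S y| ≤ Δ)
    (hε : ε ∈ Set.Ioo (0 : ℝ) 1) (hδ : δ ∈ Set.Ioo (0 : ℝ) 1)
    (hσ : Real.sqrt (2 * Real.log (1.25 / δ)) * Δ / ε ≤ σ) :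
    ∀ x y, neighbor x y → ∀ T : Set ℝ, MeasurableSet T →
      Measure.map (fun z => S x + z) (gaussianReal 0 ((σ ^ 2).toNNReal)) T
        ≤ ENNReal.ofReal (Real.exp ε) *
            Measure.map (fun z => S y + z) (gaussianReal 0 ((σ ^ 2).toNNReal)) T
          + ENNReal.ofReal δ := by
  intro x y hxy T hT
  rw [gaussianReal_map_const_add, gaussianReal_map_const_add, zero_add, zero_add]
  rcases eq_or_ne (S x) (S y) with hSxy | hSxy
  · rw [hSxy]
    exact le_add_right (le_mul_of_one_le_left' (ENNReal.one_le_ofReal.2 (one_le_exp hε.1.le)))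
  have hΔ : 0 < Δ := (abs_pos.2 (sub_ne_zero.2 hSxy)).trans_le (hsens x y hxy)
  have hL : 0 < Real.log (1.25 / δ) :=
    Real.log_pos ((one_lt_div hδ.1).2 (by linarith [hδ.2]))
  have hσ0 : 0 < σ := (div_pos (mul_pos (sqrt_pos.2 (by positivity)) hΔ) hε.1).trans_le hσ
  have hσ' : 2 * Real.log (1.25 / δ) * Δ ^ 2 ≤ (ε * σ) ^ 2 := by
    rw [div_le_iff₀ hε.1] at hσ
    calc 2 * Real.log (1.25 / δ) * Δ ^ 2 = (√(2 * Real.log (1.25 / δ)) * Δ) ^ 2 := by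
          rw [mul_pow, sq_sqrt (by positivity)]
      _ ≤ (σ * ε) ^ 2 := pow_le_pow_left₀ (by positivity) hσ 2
      _ = (ε * σ) ^ 2 := by ring
  have hv : (σ ^ 2).toNNReal ≠ 0 := by simpa using hσ0.ne'
  calc _ ≤ _ + gaussianReal (S x) _ _ := gaussianReal_le_exp_mul_add hv _ _ ε hT
    _ ≤ _ := by
      gcongr
      exact (gaussianReal_privacyLoss_gt_le hε.1.le (hsens x y hxy)).trans
        (gaussianReal_zero_Ioi_le_of_sq_log_le hΔ hε hδ hσ0.ne' hσ')

/-- The one-dimensional Gaussian mechanism with `σ ≥ √(2 ln(1.25/δ)) · Δ / ε` is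
`(ε, δ)`-differentially private for `ε, δ ∈ (0, 1)`, for a query of sensitivity `Δ`. -/
theorem gaussian_mechanism_DP {D : Type*} (neighbor : D → D → Prop) (S : D → ℝ)
    (Δ ε δ σ : ℝ) (hΔ : 0 ≤ Δ)
    (hsens : ∀ x y, neighbor x y → |S x - S y| ≤ Δ)
    (hε : ε ∈ Set.Ioo (0 : ℝ) 1) (hδ : δ ∈ Set.Ioo (0 : ℝ) 1)
    (hσ : Real.sqrt (2 * Real.log (1.25 / δ)) * Δ / ε ≤ σ) :
    ∀ x y, neighbor x y → ∀ T : Set ℝ, MeasurableSet T →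
      Measure.map (fun z => S x + z) (gaussianReal 0 ((σ ^ 2).toNNReal)) T
        ≤ ENNReal.ofReal (Real.exp ε) *
            Measure.map (fun z => S y + z) (gaussianReal 0 ((σ ^ 2).toNNReal)) T
          + ENNReal.ofReal δ :=
  gaussian_mechanism_DP_general neighbor S Δ ε δ σ hsens hε hδ hσ
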